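/- Existence and uniqueness of the Jacobi field vanishing at a prescribed time: let K : ℝ → ℝ be continuous with K(t) ≤ 0 for all t, and let T be a nonzero real number. Then there exists a unique twice continuously differentiable function J_T : ℝ → ℝ satisfying J_T''(t) + K(t)·J_T(t) = 0 for all t ∈ ℝ, J_T(0) = 1 and J_T(T) = 0. -/

import Mathlib

/-!
With `J 0 = a` and `J' 0 = b`, the Jacobi equation `J'' + K J = 0` is the Volterra integral
equation `J = a + b t + ∫₀ᵗ (s - t) K(s) J(s) ds`. Its Neumann series converges on every
`[-R, R]`, its `n`-th term being bounded by `C (R² M)ⁿ / n!` where `|K| ≤ M` there; this gives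
global Jacobi fields `u` with `(u 0, u' 0) = (1, 0)` and `v` with `(v 0, v' 0) = (0, 1)`.

Since `K ≤ 0`, `(J²)'' = 2 (J'² - K J²) ≥ 0`, so a Jacobi field vanishing at `p < q` vanishes on
`[p, q]`; then `J` and `J'` vanish at an interior point, and `J = 0` by uniqueness for the initial
value problem. Hence `v T ≠ 0`, `J_T = u - (u T / v T) v` works, and two such fields differ by a
Jacobi field vanishing at `0` and `T`, hence by zero.
-/

open Set Filter Topology intervalIntegral
open scoped Nat Interval

lemma abs_integral_le_mul_abs_pow_div {g : ℝ → ℝ} {c t : ℝ} {n : ℕ}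
    (hg : ∀ s ∈ [[0, t]], |g s| ≤ c * |s| ^ n) :
    |∫ s in 0..t, g s| ≤ c * |t| ^ (n + 1) / (n + 1) := by
  have hpow : Continuous fun s : ℝ ↦ c * s ^ n := by fun_prop
  have of_nonneg : ∀ τ, 0 ≤ τ → ∀ h : ℝ → ℝ, (∀ s ∈ Ioc 0 τ, |h s| ≤ c * s ^ n) →
      |∫ s in 0..τ, h s| ≤ c * τ ^ (n + 1) / (n + 1) := fun τ hτ h hh ↦ calc
    |∫ s in 0..τ, h s| ≤ ∫ s in 0..τ, c * s ^ n :=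
      norm_integral_le_of_norm_le (f := h) hτ (.of_forall hh) (hpow.intervalIntegrable _ _)
    _ = c * τ ^ (n + 1) / (n + 1) := by simp [integral_pow]; ring
  rcases le_total 0 t with ht | ht
  · rw [abs_of_nonneg ht]
    refine of_nonneg t ht g fun s hs ↦ ?_
    simpa [abs_of_pos hs.1] using hg s (by rw [uIcc_of_le ht]; exact Ioc_subset_Icc_self hs)
  · have := of_nonneg (-t) (neg_nonneg.2 ht) (fun s ↦ g (-s)) fun s hs ↦ by
      simpa [abs_of_neg (neg_neg_of_pos hs.1)] using
        hg (-s) (by rw [uIcc_of_ge ht]; constructor <;> linarith [hs.1, hs.2])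
    rwa [integral_comp_neg, neg_neg, neg_zero, integral_symm, abs_neg, ← abs_of_nonpos ht]
      at this

theorem abs_sub_le_abs_of_mem_uIcc {s t : ℝ} (hs : s ∈ [[0, t]]) : |s - t| ≤ |t| := by
  simpa [abs_sub_comm] using abs_sub_right_of_mem_uIcc hs

noncomputable def volterra (K f : ℝ → ℝ) (t : ℝ) : ℝ :=
  ∫ s in 0..t, (s - t) * (K s * f s)

variable {K f : ℝ → ℝ}

theorem hasDerivAt_volterra (hKf : Continuous fun s ↦ K s * f s) (t : ℝ) :
    HasDerivAt (volterra K f) (-∫ s in 0..t, K s * f s) t := by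
  have hsKf : Continuous fun s ↦ s * (K s * f s) := continuous_id.mul hKf
  have split : volterra K f =
      fun t ↦ (∫ s in 0..t, s * (K s * f s)) - t * ∫ s in 0..t, K s * f s := by
    funext t
    simp only [volterra, sub_mul]
    rw [integral_sub (f := fun s ↦ s * (K s * f s)) (g := fun s ↦ t * (K s * f s))
      (hsKf.intervalIntegrable 0 t) ((continuous_const.mul hKf).intervalIntegrable 0 t),
      integral_const_mul]
  rw [split]
  exact ((hsKf.integral_hasStrictDerivAt 0 t).hasDerivAt.fun_sub
    ((hasDerivAt_id' t).fun_mul (hKf.integral_hasStrictDerivAt 0 t).hasDerivAt)).congr_deriv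
    (by ring)

theorem continuous_volterra (hKf : Continuous fun s ↦ K s * f s) : Continuous (volterra K f) :=
  continuous_iff_continuousAt.2 fun t ↦ (hasDerivAt_volterra hKf t).continuousAt

theorem continuous_iterate_volterra (hK : Continuous K) (hf : Continuous f) (n : ℕ) :
    Continuous ((volterra K)^[n] f) := by
  induction n with
  | zero => exact hf
  | succ n ih =>
    rw [Function.iterate_succ_apply']
    exact continuous_volterra (hK.mul ih)

theorem abs_volterra_le {R M C : ℝ} {n : ℕ} (hK : ∀ s ∈ Icc (-R) R, |K s| ≤ M)
    (hf : ∀ s ∈ Icc (-R) R, |f s| ≤ C * (R * M * |s|) ^ n / n !) {t : ℝ} (ht : t ∈ Icc (-R) R) :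
    |volterra K f t| ≤ C * (R * M * |t|) ^ (n + 1) / (n + 1)! := by
  have hR : 0 ≤ R := by linarith [ht.1, ht.2]
  have hM : 0 ≤ M := (abs_nonneg _).trans (hK 0 ⟨by linarith, hR⟩)
  have hsub : [[0, t]] ⊆ Icc (-R) R := uIcc_subset_Icc ⟨by linarith, hR⟩ ht
  have hint := abs_integral_le_mul_abs_pow_div (c := R * M * (C * (R * M) ^ n / n !))
    (g := fun s ↦ (s - t) * (K s * f s)) fun s hs ↦ by
      have hfs := hf s (hsub hs)
      have hB : 0 ≤ C * (R * M * |s|) ^ n / n ! := (abs_nonneg _).trans hfs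
      calc |(s - t) * (K s * f s)| = |s - t| * (|K s| * |f s|) := by rw [abs_mul, abs_mul]
        _ ≤ R * (M * (C * (R * M * |s|) ^ n / n !)) := by
          gcongr
          · exact (abs_sub_le_abs_of_mem_uIcc hs).trans (abs_le.2 ht)
          · exact hK s (hsub hs)
        _ = R * M * (C * (R * M) ^ n / n !) * |s| ^ n := by ring
  refine hint.trans_eq ?_
  rw [Nat.factorial_succ]
  push_cast
  field_simp
  ring

theorem abs_iterate_volterra_le {R M C : ℝ} (hK : ∀ s ∈ Icc (-R) R, |K s| ≤ M)
    (hf : ∀ s ∈ Icc (-R) R, |f s| ≤ C) (n : ℕ) :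
    ∀ t ∈ Icc (-R) R, |(volterra K)^[n] f t| ≤ C * (R * M * |t|) ^ n / n ! := by
  induction n with
  | zero => simpa using hf
  | succ n ih =>
    intro t ht
    rw [Function.iterate_succ_apply']
    exact abs_volterra_le hK ih ht

theorem exists_summable_bound_iterate_volterra (hK : Continuous K) (hf : Continuous f) (R : ℝ) :
    ∃ u : ℕ → ℝ, Summable u ∧ ∀ n, ∀ t ∈ Icc (-R) R, |(volterra K)^[n] f t| ≤ u n := by
  obtain ⟨M, hM⟩ := (isCompact_Icc (a := -R) (b := R)).exists_bound_of_continuousOn hK.continuousOn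
  obtain ⟨C, hC⟩ := (isCompact_Icc (a := -R) (b := R)).exists_bound_of_continuousOn hf.continuousOn
  refine ⟨fun n ↦ C * ((R * M * R) ^ n / n !),
    (Real.summable_pow_div_factorial _).mul_left C, fun n t ht ↦ ?_⟩
  have hR : 0 ≤ R := by linarith [ht.1, ht.2]
  have h0 : (0 : ℝ) ∈ Icc (-R) R := ⟨by linarith, hR⟩
  have hM0 : 0 ≤ M := (norm_nonneg _).trans (hM 0 h0)
  have hC0 : 0 ≤ C := (norm_nonneg _).trans (hC 0 h0)
  refine (abs_iterate_volterra_le hM hC n t ht).trans ?_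
  dsimp only
  rw [← mul_div_assoc]
  gcongr
  exact abs_le.2 ht

noncomputable def volterraNeumann (K f : ℝ → ℝ) (t : ℝ) : ℝ :=
  ∑' n, (volterra K)^[n] f t

theorem summable_iterate_volterra (hK : Continuous K) (hf : Continuous f) (t : ℝ) :
    Summable fun n ↦ (volterra K)^[n] f t := by
  obtain ⟨u, hu, hbound⟩ := exists_summable_bound_iterate_volterra hK hf |t|
  exact hu.of_norm_bounded fun n ↦ hbound n t ⟨neg_abs_le t, le_abs_self t⟩

theorem continuous_volterraNeumann (hK : Continuous K) (hf : Continuous f) :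
    Continuous (volterraNeumann K f) := by
  refine continuous_iff_continuousAt.2 fun t ↦ ?_
  obtain ⟨u, hu, hbound⟩ := exists_summable_bound_iterate_volterra hK hf (|t| + 1)
  refine (continuousOn_tsum (fun n ↦ (continuous_iterate_volterra hK hf n).continuousOn) hu
    hbound).continuousAt (Icc_mem_nhds ?_ ?_)
  · linarith [neg_abs_le t]
  · linarith [le_abs_self t]

theorem volterraNeumann_eq (hK : Continuous K) (hf : Continuous f) (t : ℝ) :
    volterraNeumann K f t = f t + volterra K (volterraNeumann K f) t := by
  obtain ⟨u, hu, hbound⟩ := exists_summable_bound_iterate_volterra hK hf |t|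
  obtain ⟨M, hM⟩ :=
    (isCompact_Icc (a := -|t|) (b := |t|)).exists_bound_of_continuousOn hK.continuousOn
  have hsub : Ι 0 t ⊆ Icc (-|t|) |t| := uIoc_subset_uIcc.trans
    (uIcc_subset_Icc ⟨neg_nonpos.2 (abs_nonneg t), abs_nonneg t⟩ ⟨neg_abs_le t, le_abs_self t⟩)
  have hsum : HasSum (fun n ↦ volterra K ((volterra K)^[n] f) t)
      (volterra K (volterraNeumann K f) t) := by
    refine hasSum_integral_of_dominated_convergence (fun n _ ↦ |t| * (M * u n))
      (fun n ↦ (((continuous_id.sub continuous_const).mul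
        (hK.mul (continuous_iterate_volterra hK hf n))).aestronglyMeasurable))
      (fun n ↦ .of_forall fun s hs ↦ ?_) (.of_forall fun s _ ↦ (hu.mul_left M).mul_left |t|)
      intervalIntegrable_const
      (.of_forall fun s _ ↦ ((summable_iterate_volterra hK hf s).hasSum.mul_left (K s)).mul_left _)
    rw [norm_mul, norm_mul]
    gcongr
    · exact abs_sub_le_abs_of_mem_uIcc (uIoc_subset_uIcc hs)
    · exact (norm_nonneg _).trans (hM s (hsub hs))
    · exact hM s (hsub hs)
    · exact hbound n s (hsub hs)
  rw [volterraNeumann, (summable_iterate_volterra hK hf t).tsum_eq_zero_add]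
  simp only [Function.iterate_succ_apply', hsum.tsum_eq, Function.iterate_zero, id]

theorem lipschitzWith_prodMk_snd_neg_mul {k : ℝ} {M : NNReal} (hk : |k| ≤ M) :
    LipschitzWith (max 1 M) fun x : ℝ × ℝ ↦ (x.2, -(k * x.1)) := by
  refine LipschitzWith.of_dist_le_mul fun x y ↦ ?_
  simp only [Prod.dist_eq, Real.dist_eq, NNReal.coe_max, NNReal.coe_one]
  have hM : (M : ℝ) ≤ max 1 M := le_max_right _ _
  refine max_le ?_ ?_
  · exact (le_max_right _ _).trans (le_mul_of_one_le_left (by positivity) (le_max_left _ _))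
  · calc |-(k * x.1) - -(k * y.1)| = |k| * |x.1 - y.1| := by
          rw [← abs_mul, ← abs_neg]; ring_nf
      _ ≤ max 1 M * max |x.1 - y.1| |x.2 - y.2| :=
        mul_le_mul (hk.trans hM) (le_max_left _ _) (abs_nonneg _) (by positivity)

structure IsJacobiField (K J : ℝ → ℝ) : Prop where
  contDiff : ContDiff ℝ 2 J
  deriv_deriv_add_mul : ∀ t, deriv (deriv J) t + K t * J t = 0

namespace IsJacobiField

variable {J J₁ J₂ : ℝ → ℝ}

theorem differentiable (h : IsJacobiField K J) : Differentiable ℝ J :=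
  h.contDiff.differentiable (by norm_num)

theorem hasDerivAt_deriv (h : IsJacobiField K J) (t : ℝ) :
    HasDerivAt (deriv J) (-(K t * J t)) t := by
  rw [← eq_neg_of_add_eq_zero_left (h.deriv_deriv_add_mul t)]
  exact (h.contDiff.differentiable_deriv_two t).hasDerivAt

theorem of_hasDerivAt (hK : Continuous K) {J' : ℝ → ℝ} (hJ : ∀ t, HasDerivAt J (J' t) t)
    (hJ' : ∀ t, HasDerivAt J' (-(K t * J t)) t) : IsJacobiField K J := by
  have hd : deriv J = J' := funext fun t ↦ (hJ t).deriv
  have hdd : deriv J' = fun t ↦ -(K t * J t) := funext fun t ↦ (hJ' t).deriv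
  have hJc : Continuous J := continuous_iff_continuousAt.2 fun t ↦ (hJ t).continuousAt
  refine ⟨?_, fun t ↦ by rw [hd, hdd]; ring⟩
  rw [show (2 : WithTop ℕ∞) = 1 + 1 from rfl, contDiff_succ_iff_deriv, hd, contDiff_one_iff_deriv,
    hdd]
  exact ⟨fun t ↦ (hJ t).differentiableAt, by simp, fun t ↦ (hJ' t).differentiableAt,
    (hK.mul hJc).neg⟩

theorem convexOn_sq (hKneg : ∀ t, K t ≤ 0) (h : IsJacobiField K J) :
    ConvexOn ℝ univ fun t ↦ J t ^ 2 := by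
  have hd : ∀ t, HasDerivAt (fun t ↦ J t ^ 2) (2 * J t * deriv J t) t := fun t ↦
    ((h.differentiable t).hasDerivAt.pow 2).congr_deriv (by ring)
  have hdd : ∀ t, HasDerivAt (fun t ↦ 2 * J t * deriv J t)
      (2 * (deriv J t ^ 2 - K t * J t ^ 2)) t := fun t ↦
    (((h.differentiable t).hasDerivAt.const_mul 2).mul (h.hasDerivAt_deriv t)).congr_deriv
      (by ring)
  refine convexOn_of_hasDerivWithinAt2_nonneg convex_univ
    (h.differentiable.continuous.pow 2).continuousOn
    (fun t _ ↦ (hd t).hasDerivWithinAt) (fun t _ ↦ (hdd t).hasDerivWithinAt) fun t _ ↦ ?_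
  nlinarith [hKneg t, sq_nonneg (deriv J t), sq_nonneg (J t)]

theorem sub (hK : Continuous K) (h₁ : IsJacobiField K J₁) (h₂ : IsJacobiField K J₂) :
    IsJacobiField K (J₁ - J₂) :=
  of_hasDerivAt hK (fun t ↦ (h₁.differentiable t).hasDerivAt.sub (h₂.differentiable t).hasDerivAt)
    fun t ↦ ((h₁.hasDerivAt_deriv t).sub (h₂.hasDerivAt_deriv t)).congr_deriv (by simp; ring)

theorem const_smul (hK : Continuous K) (h : IsJacobiField K J) (c : ℝ) :
    IsJacobiField K (c • J) :=
  of_hasDerivAt hK (fun t ↦ (h.differentiable t).hasDerivAt.const_smul c)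
    fun t ↦ ((h.hasDerivAt_deriv t).const_smul c).congr_deriv (by simp; ring)

theorem eq_zero_of_eq_zero_of_deriv_eq_zero (hK : Continuous K) (h : IsJacobiField K J)
    {t₀ : ℝ} (h₀ : J t₀ = 0) (h₁ : deriv J t₀ = 0) : J = 0 := by
  funext t
  set R := |t| + |t₀| + 1
  obtain ⟨M, hM⟩ := (isCompact_Icc (a := -R) (b := R)).exists_bound_of_continuousOn hK.continuousOn
  have hv : ∀ s ∈ Ioo (-R) R, LipschitzOnWith (max 1 M.toNNReal)
      (fun x : ℝ × ℝ ↦ (x.2, -(K s * x.1))) univ := fun s hs ↦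
    (lipschitzWith_prodMk_snd_neg_mul ((hM s (Ioo_subset_Icc_self hs)).trans
      (Real.le_coe_toNNReal M))).lipschitzOnWith
  have hmem : ∀ τ, |τ| < R → τ ∈ Ioo (-R) R := fun τ hτ ↦ abs_lt.1 hτ
  have := ODE_solution_unique_of_mem_Ioo hv
    (hmem t₀ (show |t₀| < |t| + |t₀| + 1 by linarith [abs_nonneg t]))
    (f := fun s ↦ (J s, deriv J s)) (g := fun _ ↦ 0)
    (fun s _ ↦ ⟨(h.differentiable s).hasDerivAt.prodMk (h.hasDerivAt_deriv s), trivial⟩)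
    (fun s _ ↦ ⟨by convert hasDerivAt_const s (0 : ℝ × ℝ) using 1; simp, trivial⟩)
    (by simp [h₀, h₁]) (hmem t (show |t| < |t| + |t₀| + 1 by linarith [abs_nonneg t₀]))
  simpa using congrArg Prod.fst this

theorem eq_zero_of_eq_zero_of_eq_zero (hK : Continuous K) (hKneg : ∀ t, K t ≤ 0)
    (h : IsJacobiField K J) {p q : ℝ} (hpq : p ≠ q) (hp : J p = 0) (hq : J q = 0) : J = 0 := by
  wlog hlt : p < q generalizing p q
  · exact this hpq.symm hq hp (hpq.symm.lt_of_le (not_lt.1 hlt))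
  have hvanish : ∀ s ∈ Icc p q, J s = 0 := fun s hs ↦ by
    have := (h.convexOn_sq hKneg).le_on_segment (mem_univ p) (mem_univ q)
      (by rwa [segment_eq_Icc hlt.le])
    simpa [hp, hq] using this
  have hm : Icc p q ∈ 𝓝 ((p + q) / 2) := Icc_mem_nhds (by linarith) (by linarith)
  refine h.eq_zero_of_eq_zero_of_deriv_eq_zero hK (hvanish _ (mem_of_mem_nhds hm)) ?_
  rw [(eventuallyEq_of_mem hm hvanish).deriv_eq]
  simp

end IsJacobiField

theorem exists_isJacobiField (hK : Continuous K) (a b : ℝ) :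
    ∃ J, IsJacobiField K J ∧ J 0 = a ∧ deriv J 0 = b := by
  have hf : Continuous fun t : ℝ ↦ a + b * t := by fun_prop
  set J := volterraNeumann K fun t ↦ a + b * t
  have hJc : Continuous J := continuous_volterraNeumann hK hf
  have hJ_eq : (fun t ↦ a + b * t + volterra K J t) = J :=
    funext fun t ↦ (volterraNeumann_eq hK hf t).symm
  have hJ' : ∀ t, HasDerivAt J (b - ∫ s in 0..t, K s * J s) t := fun t ↦ by
    have := (((hasDerivAt_id' t).const_mul b).const_add a).fun_add
      (hasDerivAt_volterra (hK.mul hJc) t)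
    rw [hJ_eq] at this
    exact this.congr_deriv (by ring)
  have hJ'' : ∀ t, HasDerivAt (fun t ↦ b - ∫ s in 0..t, K s * J s) (-(K t * J t)) t := fun t ↦
    ((hK.mul hJc).integral_hasStrictDerivAt 0 t).hasDerivAt.const_sub b
  refine ⟨J, .of_hasDerivAt hK hJ' hJ'', ?_, by simp [(hJ' 0).deriv]⟩
  rw [← hJ_eq]
  simp [volterra]

theorem jacobi_field_vanishing_at_T_exists_unique
    (K : ℝ → ℝ) (hKcont : Continuous K) (hKneg : ∀ t : ℝ, K t ≤ 0)
    (T : ℝ) (hT : T ≠ 0) :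
    ∃! J : ℝ → ℝ, ContDiff ℝ 2 J ∧
      (∀ t : ℝ, deriv (deriv J) t + K t * J t = 0) ∧ J 0 = 1 ∧ J T = 0 := by
  obtain ⟨u, hu, hu₀, -⟩ := exists_isJacobiField hKcont 1 0
  obtain ⟨v, hv, hv₀, hv'₀⟩ := exists_isJacobiField hKcont 0 1
  have hvT : v T ≠ 0 := fun hvT ↦ by
    simp [hv.eq_zero_of_eq_zero_of_eq_zero hKcont hKneg hT.symm hv₀ hvT] at hv'₀
  have hJ := hu.sub hKcont (hv.const_smul hKcont (u T / v T))
  refine ⟨_, ⟨hJ.contDiff, hJ.deriv_deriv_add_mul, by simp [hu₀, hv₀],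
    by simp [div_mul_cancel₀ _ hvT]⟩, ?_⟩
  rintro J ⟨hJc, hJ_ode, hJ₀, hJT⟩
  have hw := IsJacobiField.sub hKcont ⟨hJc, hJ_ode⟩ hJ
  refine sub_eq_zero.1 (hw.eq_zero_of_eq_zero_of_eq_zero hKcont hKneg hT.symm ?_ ?_)
  · simp [hJ₀, hu₀, hv₀]
  · simp [hJT, div_mul_cancel₀ _ hvT]
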